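/- arXiv:2401.02694 — 3 statements merged into one kernel-verified Lean document; each statement's English description precedes it below -/
import Mathlib

section
/- Let L(θ) = (1/2)θᵀAθ − bᵀθ with A symmetric, let θ0 have support S with |S| = s, and let θ̂ satisfy L(θ̂) + η‖θ̂‖₁ ≤ L(θ0) + η‖θ0‖₁ for some η > 0 (optimality). Assume the deviation condition ‖∇L(θ0)‖_∞ ≤ η/2 and the restricted eigenvalue condition: ΔᵀAΔ ≥ α‖Δ‖₂² − κ‖Δ‖₁² for all Δ ∈ ℝ^d, where α > 0 and κ ≥ 0. If additionally η ≥ 2κ‖θ̂ − θ0‖₁, then the error Δ = θ̂ − θ0 satisfies the cone condition ‖Δ_{S^c}‖₁ ≤ 7‖Δ_S‖₁. -/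
open Finset Matrix

/-- Cone condition for the η-penalized minimizer of a quadratic loss under the
deviation and restricted eigenvalue conditions. -/
theorem stmt4 (d s : ℕ) (A : Matrix (Fin d) (Fin d) ℝ) (hA : A.IsSymm)
    (b : Fin d → ℝ) (L : (Fin d → ℝ) → ℝ)
    (hL : ∀ θ, L θ = (1 / 2) * (θ ⬝ᵥ A.mulVec θ) - b ⬝ᵥ θ)
    (θ0 θhat : Fin d → ℝ) (S : Finset (Fin d))
    (hS : ∀ j, j ∈ S ↔ θ0 j ≠ 0) (hcard : S.card = s)
    (η α κ : ℝ) (hη : 0 < η) (hα : 0 < α) (hκ : 0 ≤ κ)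
    (hopt : L θhat + η * ∑ j, |θhat j| ≤ L θ0 + η * ∑ j, |θ0 j|)
    (hdev : ∀ j, |(A.mulVec θ0 - b) j| ≤ η / 2)
    (hRE : ∀ Δ : Fin d → ℝ,
      Δ ⬝ᵥ A.mulVec Δ ≥ α * (∑ j, (Δ j) ^ 2) - κ * (∑ j, |Δ j|) ^ 2)
    (hηκ : η ≥ 2 * κ * ∑ j, |θhat j - θ0 j|) :
    ∑ j ∈ Sᶜ, |θhat j - θ0 j| ≤ 7 * ∑ j ∈ S, |θhat j - θ0 j| := by
  set Δ : Fin d → ℝ := fun j => θhat j - θ0 j with hΔ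
  set g : Fin d → ℝ := A.mulVec θ0 - b with hg
  set a : ℝ := ∑ j ∈ S, |Δ j| with ha
  set c : ℝ := ∑ j ∈ Sᶜ, |Δ j| with hc
  have hT : (∑ j, |Δ j|) = a + c := by
    rw [ha, hc, Finset.sum_add_sum_compl]
  have ha0 : 0 ≤ a := Finset.sum_nonneg fun j _ => abs_nonneg _
  have hc0 : 0 ≤ c := Finset.sum_nonneg fun j _ => abs_nonneg _
  -- exact quadratic expansion
  have hsym : θ0 ⬝ᵥ A.mulVec Δ = Δ ⬝ᵥ A.mulVec θ0 := by
    rw [Matrix.dotProduct_mulVec, ← Matrix.mulVec_transpose, hA.eq,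
      dotProduct_comm]
  have hexp : L θhat - L θ0 = g ⬝ᵥ Δ + (1 / 2) * (Δ ⬝ᵥ A.mulVec Δ) := by
    have hθ : θhat = θ0 + Δ := by funext j; simp [hΔ]
    rw [hL, hL, hθ, hg]
    simp only [Matrix.mulVec_add, add_dotProduct, dotProduct_add,
      sub_dotProduct]
    ring_nf
    rw [hsym, dotProduct_comm (A.mulVec θ0) Δ]
    ring
  -- Hölder bound on g ⬝ᵥ Δ
  have hholder : |g ⬝ᵥ Δ| ≤ (η / 2) * (a + c) := by
    rw [← hT]
    calc |g ⬝ᵥ Δ| ≤ ∑ j, |g j * Δ j| := by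
          exact Finset.abs_sum_le_sum_abs _ _
      _ ≤ ∑ j, (η / 2) * |Δ j| := by
          apply Finset.sum_le_sum
          intro j _
          rw [abs_mul]
          exact mul_le_mul_of_nonneg_right (hdev j) (abs_nonneg _)
      _ = (η / 2) * ∑ j, |Δ j| := by rw [Finset.mul_sum]
  -- RE lower bound
  have hquad : Δ ⬝ᵥ A.mulVec Δ ≥ -(η / 2) * (a + c) := by
    have h1 := hRE Δ
    have h2 : 0 ≤ α * ∑ j, (Δ j) ^ 2 :=
      mul_nonneg hα.le (Finset.sum_nonneg fun j _ => sq_nonneg _)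
    have h3 : κ * (∑ j, |Δ j|) ^ 2 ≤ (η / 2) * (a + c) := by
      rw [hT] at hηκ ⊢
      nlinarith [sq_nonneg (a + c)]
    linarith
  -- decomposability
  have hdecomp : (∑ j, |θ0 j|) - (∑ j, |θhat j|) ≤ a - c := by
    have h1 : ∀ (f : Fin d → ℝ), (∑ j, f j) = ∑ j ∈ S, f j + ∑ j ∈ Sᶜ, f j :=
      fun f => (Finset.sum_add_sum_compl S f).symm
    rw [h1 (fun j => |θ0 j|), h1 (fun j => |θhat j|), ha, hc]
    have hSbound : ∑ j ∈ S, |θ0 j| - ∑ j ∈ S, |θhat j| ≤ ∑ j ∈ S, |Δ j| := by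
      rw [← Finset.sum_sub_distrib]
      apply Finset.sum_le_sum
      intro j _
      have := abs_sub_abs_le_abs_sub (θ0 j) (θhat j)
      have : |θ0 j - θhat j| = |Δ j| := by rw [hΔ]; simp [abs_sub_comm]
      linarith [abs_sub_abs_le_abs_sub (θ0 j) (θhat j), this.symm ▸
        abs_sub_abs_le_abs_sub (θ0 j) (θhat j)]
    have hScbound : ∑ j ∈ Sᶜ, |θ0 j| - ∑ j ∈ Sᶜ, |θhat j| = -∑ j ∈ Sᶜ, |Δ j| := by
      rw [← Finset.sum_sub_distrib, ← Finset.sum_neg_distrib]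
      apply Finset.sum_congr rfl
      intro j hj
      have h0 : θ0 j = 0 := by
        by_contra h
        exact (Finset.mem_compl.mp hj) ((hS j).mpr h)
      simp [hΔ, h0]
    linarith
  -- combine
  have hkey : g ⬝ᵥ Δ + (1 / 2) * (Δ ⬝ᵥ A.mulVec Δ) ≤ η * (a - c) := by
    rw [← hexp]
    have := mul_le_mul_of_nonneg_left hdecomp hη.le
    linarith
  have habs := neg_abs_le (g ⬝ᵥ Δ)
  nlinarith
end

section
/- Under the setting of the previous statement (quadratic loss L(θ) = (1/2)θᵀAθ − bᵀθ, A symmetric, θ0 with support S of size s, θ̂ an η-penalized minimizer with ‖∇L(θ0)‖_∞ ≤ η/2, restricted eigenvalue condition ΔᵀAΔ ≥ α‖Δ‖₂² − κ‖Δ‖₁² for all Δ, and 32κs ≤ α/4 together with η ≥ 2κ‖θ̂ − θ0‖₁), the error satisfies ‖θ̂ − θ0‖₂ ≤ 48√s · η / α and ‖θ̂ − θ0‖₁ ≤ 384 s η / α. -/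
open Finset Matrix

set_option maxHeartbeats 1000000 in
/-- ℓ2 and ℓ1 error bounds for the η-penalized minimizer of a quadratic loss. -/
theorem stmt5 (d s : ℕ) (A : Matrix (Fin d) (Fin d) ℝ) (hA : A.IsSymm)
    (b : Fin d → ℝ) (L : (Fin d → ℝ) → ℝ)
    (hL : ∀ θ, L θ = (1 / 2) * (θ ⬝ᵥ A.mulVec θ) - b ⬝ᵥ θ)
    (θ0 θhat : Fin d → ℝ) (S : Finset (Fin d))
    (hS : ∀ j, j ∈ S ↔ θ0 j ≠ 0) (hcard : S.card = s)
    (η α κ : ℝ) (hη : 0 < η) (hα : 0 < α) (hκ : 0 ≤ κ)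
    (hopt : L θhat + η * ∑ j, |θhat j| ≤ L θ0 + η * ∑ j, |θ0 j|)
    (hdev : ∀ j, |(A.mulVec θ0 - b) j| ≤ η / 2)
    (hRE : ∀ Δ : Fin d → ℝ,
      Δ ⬝ᵥ A.mulVec Δ ≥ α * (∑ j, (Δ j) ^ 2) - κ * (∑ j, |Δ j|) ^ 2)
    (hsκ : 32 * κ * s ≤ α / 4)
    (hηκ : η ≥ 2 * κ * ∑ j, |θhat j - θ0 j|) :
    Real.sqrt (∑ j, (θhat j - θ0 j) ^ 2) ≤ 48 * Real.sqrt s * η / α ∧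
    ∑ j, |θhat j - θ0 j| ≤ 384 * s * η / α := by
  set Δ : Fin d → ℝ := θhat - θ0 with hΔ
  have hΔj : ∀ j, Δ j = θhat j - θ0 j := fun j => rfl
  -- symmetry of the bilinear form
  have hsym : ∀ u v : Fin d → ℝ, u ⬝ᵥ A.mulVec v = v ⬝ᵥ A.mulVec u := by
    intro u v
    rw [dotProduct_mulVec, ← mulVec_transpose, hA.eq, dotProduct_comm]
  -- expansion of the loss difference
  have hexp : L θhat - L θ0
      = (1/2) * (Δ ⬝ᵥ A.mulVec Δ) + (A.mulVec θ0 - b) ⬝ᵥ Δ := by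
    have e3 : Δ ⬝ᵥ A.mulVec Δ
        = θhat ⬝ᵥ A.mulVec θhat - 2 * (θhat ⬝ᵥ A.mulVec θ0) + θ0 ⬝ᵥ A.mulVec θ0 := by
      rw [hΔ, sub_dotProduct, mulVec_sub, dotProduct_sub, dotProduct_sub,
        hsym θ0 θhat]
      ring
    have e2 : (A.mulVec θ0 - b) ⬝ᵥ Δ
        = θhat ⬝ᵥ A.mulVec θ0 - θ0 ⬝ᵥ A.mulVec θ0 - (b ⬝ᵥ θhat - b ⬝ᵥ θ0) := by
      rw [sub_dotProduct, dotProduct_comm (A.mulVec θ0), hΔ, sub_dotProduct,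
        dotProduct_sub]
    rw [hL θhat, hL θ0, e2, e3]
    ring
  -- abbreviations
  set r1 : ℝ := ∑ j, |Δ j| with hr1
  set r2 : ℝ := ∑ j, (Δ j) ^ 2 with hr2
  set rS : ℝ := ∑ j ∈ S, |Δ j| with hrS
  set rSc : ℝ := ∑ j ∈ Finset.univ \ S, |Δ j| with hrSc
  have hr1split : r1 = rS + rSc := by
    rw [hr1, hrS, hrSc, ← Finset.sum_sdiff (Finset.subset_univ S)]; ring
  have hrSnn : 0 ≤ rS := Finset.sum_nonneg fun j _ => abs_nonneg _
  have hrScnn : 0 ≤ rSc := Finset.sum_nonneg fun j _ => abs_nonneg _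
  have hr2nn : 0 ≤ r2 := Finset.sum_nonneg fun j _ => sq_nonneg _
  have hr1nn : 0 ≤ r1 := Finset.sum_nonneg fun j _ => abs_nonneg _
  -- the gradient term bound
  have hgrad : |(A.mulVec θ0 - b) ⬝ᵥ Δ| ≤ (η/2) * r1 := by
    rw [dotProduct, hr1, Finset.mul_sum]
    refine (Finset.abs_sum_le_sum_abs _ _).trans (Finset.sum_le_sum fun j _ => ?_)
    rw [abs_mul]
    exact mul_le_mul_of_nonneg_right (hdev j) (abs_nonneg _)
  -- ℓ1 decrease bound
  have hl1 : (∑ j, |θ0 j|) - (∑ j, |θhat j|) ≤ rS - rSc := by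
    rw [← Finset.sum_sdiff (Finset.subset_univ S) (f := fun j => |θ0 j|),
      ← Finset.sum_sdiff (Finset.subset_univ S) (f := fun j => |θhat j|),
      hrS, hrSc]
    have h1 : ∑ j ∈ Finset.univ \ S, |θ0 j| = 0 := by
      refine Finset.sum_eq_zero fun j hj => ?_
      have : θ0 j = 0 := by
        by_contra h
        exact (Finset.mem_sdiff.mp hj).2 ((hS j).mpr h)
      simp [this]
    have h2 : ∀ j ∈ Finset.univ \ S, |θhat j| = |Δ j| := by
      intro j hj
      have : θ0 j = 0 := by
        by_contra h
        exact (Finset.mem_sdiff.mp hj).2 ((hS j).mpr h)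
      simp [hΔj, this]
    have h3 : ∀ j ∈ S, |θ0 j| - |θhat j| ≤ |Δ j| := by
      intro j _
      have := abs_sub_abs_le_abs_sub (θ0 j) (θhat j)
      have h4 : |θ0 j - θhat j| = |Δ j| := by rw [hΔj, abs_sub_comm]
      linarith
    rw [Finset.sum_congr rfl h2, h1]
    have := Finset.sum_le_sum h3
    rw [Finset.sum_sub_distrib] at this
    linarith
  -- basic inequality
  have hbasic : (1/2) * (Δ ⬝ᵥ A.mulVec Δ) ≤ (3*η/2) * rS - (η/2) * rSc := by
    have h1 : L θhat - L θ0 ≤ η * ((∑ j, |θ0 j|) - (∑ j, |θhat j|)) := by nlinarith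
    have h2 : η * ((∑ j, |θ0 j|) - (∑ j, |θhat j|)) ≤ η * (rS - rSc) :=
      mul_le_mul_of_nonneg_left hl1 hη.le
    have h3 : -((η/2) * r1) ≤ (A.mulVec θ0 - b) ⬝ᵥ Δ := neg_le_of_abs_le hgrad
    rw [hr1split] at h3
    nlinarith [hexp]
  -- RE lower bound
  have hre := hRE Δ
  rw [← hr1, ← hr2] at hre
  -- κ r1² ≤ (η/2) r1
  have hηκ' : η ≥ 2 * κ * r1 := hηκ
  have hκr1 : κ * r1 ^ 2 ≤ (η/2) * r1 := by nlinarith [hηκ', hr1nn]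
  -- cone condition
  have hcone : rSc ≤ 7 * rS := by
    by_contra h
    push_neg at h
    nlinarith [hbasic, hre, hκr1, mul_nonneg hα.le hr2nn, hr1split,
      mul_pos hη (by linarith : (0:ℝ) < rSc - 7 * rS)]
  -- Cauchy-Schwarz: rS ≤ √s √r2
  have hN : Real.sqrt r2 ^ 2 = r2 := Real.sq_sqrt hr2nn
  have hs : Real.sqrt (s:ℝ) ^ 2 = (s:ℝ) := Real.sq_sqrt (Nat.cast_nonneg s)
  set N : ℝ := Real.sqrt r2 with hNdef
  set rs : ℝ := Real.sqrt (s:ℝ) with hrsdef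
  have hNnn : 0 ≤ N := Real.sqrt_nonneg _
  have hrsnn : 0 ≤ rs := Real.sqrt_nonneg _
  have hCS : rS ≤ rs * N := by
    have h := Finset.sum_mul_sq_le_sq_mul_sq S (fun _ => (1:ℝ)) (fun j => |Δ j|)
    simp only [one_mul, one_pow] at h
    have hsum1 : ∑ _j ∈ S, (1:ℝ) = (s:ℝ) := by simp [hcard]
    have hsumsq : ∑ j ∈ S, |Δ j| ^ 2 ≤ r2 := by
      rw [hr2]
      refine Finset.sum_le_sum_of_subset_of_nonneg (Finset.subset_univ S)
        (fun j _ _ => sq_nonneg _) |>.trans_eq' ?_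
      exact Finset.sum_congr rfl fun j _ => by rw [sq_abs]
    rw [hsum1, ← hrS] at h
    have h' : rS ^ 2 ≤ rs ^ 2 * N ^ 2 := by
      rw [hs, hN]
      calc rS ^ 2 ≤ (s:ℝ) * ∑ j ∈ S, |Δ j| ^ 2 := h
        _ ≤ (s:ℝ) * r2 := mul_le_mul_of_nonneg_left hsumsq (Nat.cast_nonneg s)
    calc rS = Real.sqrt (rS ^ 2) := (Real.sqrt_sq hrSnn).symm
      _ ≤ Real.sqrt (rs ^ 2 * N ^ 2) := Real.sqrt_le_sqrt h'
      _ = rs * N := by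
          rw [show rs ^ 2 * N ^ 2 = (rs * N) ^ 2 by ring,
            Real.sqrt_sq (mul_nonneg hrsnn hNnn)]
  show N ≤ 48 * rs * η / α ∧ r1 ≤ 384 * (s:ℝ) * η / α
  have hAΔ : Δ ⬝ᵥ A.mulVec Δ ≤ 3 * η * rS := by
    linarith [hbasic, mul_nonneg hη.le hrScnn]
  have hre2 : α * r2 - κ * r1 ^ 2 ≤ 3 * η * rS := le_trans hre.le hAΔ
  clear_value Δ r1 r2 rS rSc N rs
  clear hre hbasic hexp hgrad hl1 hopt hηκ hRE hdev hL hsym hΔj hΔ hr1 hr2 hrS hrSc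
  have hr18 : r1 ≤ 8 * (rs * N) := by
    have : rS ≤ rs * N := hCS
    linarith [hcone, hr1split]
  -- main bound
  have hmain : (α/2) * N^2 ≤ 3 * η * (rs * N) := by
    have hκbound : κ * r1 ^ 2 ≤ (α/2) * N^2 := by
      have h64 : 64 * κ * (s:ℝ) ≤ α / 2 := by linarith
      have h1 : r1 ^ 2 ≤ (8 * (rs * N)) ^ 2 := by
        have := pow_le_pow_left₀ hr1nn hr18 2
        exact this
      have h2 : κ * r1 ^ 2 ≤ κ * (8 * (rs * N)) ^ 2 :=
        mul_le_mul_of_nonneg_left h1 hκ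
      have h3 : κ * (8 * (rs * N)) ^ 2 = 64 * κ * (s:ℝ) * N ^ 2 := by
        rw [mul_pow, mul_pow, hs]; ring
      have h4 : 64 * κ * (s:ℝ) * N ^ 2 ≤ (α/2) * N ^ 2 :=
        mul_le_mul_of_nonneg_right h64 (sq_nonneg N)
      linarith
    have h5 : 3 * η * rS ≤ 3 * η * (rs * N) :=
      mul_le_mul_of_nonneg_left hCS (by linarith)
    have h6 : α * N ^ 2 - κ * r1 ^ 2 ≤ 3 * η * rS := by rw [hN]; exact hre2
    linarith [h6, h5, hκbound]
  have hN6 : N ≤ 6 * rs * η / α := by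
    rcases eq_or_lt_of_le hNnn with h0 | h0
    · rw [← h0]; positivity
    · rw [le_div_iff₀ hα]
      nlinarith
  constructor
  · calc N ≤ 6 * rs * η / α := hN6
      _ ≤ 48 * rs * η / α := (div_le_div_iff_of_pos_right hα).mpr (by nlinarith)
  · calc r1 ≤ 8 * (rs * N) := hr18
      _ ≤ 8 * (rs * (6 * rs * η / α)) := by
        apply mul_le_mul_of_nonneg_left _ (by norm_num)
        exact mul_le_mul_of_nonneg_left hN6 hrsnn
      _ = 48 * (rs^2) * η / α := by ring
      _ = 48 * (s:ℝ) * η / α := by rw [hs]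
      _ ≤ 384 * (s:ℝ) * η / α :=
        (div_le_div_iff_of_pos_right hα).mpr (by nlinarith [Nat.cast_nonneg (α := ℝ) s])
end

section
/- Let Δ be a symmetric d×d real matrix and s ≥ 1. Suppose |vᵀΔv| ≤ δ for every v ∈ ℝ^d with ‖v‖₂ ≤ 1 and ‖v‖₀ ≤ 2s. Then for every x ∈ ℝ^d, |xᵀΔx| ≤ 27δ ( ‖x‖₂² + (1/s)‖x‖₁² ). -/
/-!
Sort the coordinates of `x` by decreasing `|x i|` and cut the ranks into blocks of `s`
consecutive ones. Polarization turns the hypothesis into `|uᵀΔv| ≤ 2δ‖u‖₂‖v‖₂` for `s`-sparse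
`u, v`, so expanding `x` as the sum of its blocks gives `|xᵀΔx| ≤ 2δ (∑ₖ ‖x_{Bₖ}‖₂)²`. Every
coordinate in block `k + 1` is at most the average of `|x|` over the full block `k`, whence
`‖x_{Bₖ₊₁}‖₂ ≤ ‖x_{Bₖ}‖₁ / √s` and `∑ₖ ‖x_{Bₖ}‖₂ ≤ ‖x‖₂ + ‖x‖₁ / √s`. This gives the constant
`4 ≤ 27`.
-/

open Finset Matrix Function

section SparseBilinear

variable {ι : Type*} [Fintype ι]

lemma dotProduct_mulVec_eq_polarization {Δ : Matrix ι ι ℝ} (hΔ : Δ.IsSymm) (u v : ι → ℝ) :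
    u ⬝ᵥ Δ *ᵥ v = ((2 : ℝ)⁻¹ • (u + v)) ⬝ᵥ Δ *ᵥ ((2 : ℝ)⁻¹ • (u + v)) -
      ((2 : ℝ)⁻¹ • (u - v)) ⬝ᵥ Δ *ᵥ ((2 : ℝ)⁻¹ • (u - v)) := by
  have hsymm : v ⬝ᵥ Δ *ᵥ u = u ⬝ᵥ Δ *ᵥ v := by
    rw [dotProduct_mulVec, ← mulVec_transpose, hΔ.eq, dotProduct_comm]
  simp only [mulVec_smul, mulVec_add, mulVec_sub, smul_dotProduct, dotProduct_smul,
    add_dotProduct, dotProduct_add, sub_dotProduct, dotProduct_sub, smul_eq_mul, hsymm]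
  ring

lemma abs_dotProduct_mulVec_le_of_sparse {Δ : Matrix ι ι ℝ} (hΔ : Δ.IsSymm) {s : ℕ} {δ : ℝ}
    (hsparse : ∀ v : ι → ℝ, √(∑ j, v j ^ 2) ≤ 1 → (support v).ncard ≤ 2 * s →
      |v ⬝ᵥ Δ *ᵥ v| ≤ δ)
    {u v : ι → ℝ} (hu : (support u).ncard ≤ s) (hv : (support v).ncard ≤ s)
    (hu1 : ∑ j, u j ^ 2 ≤ 1) (hv1 : ∑ j, v j ^ 2 ≤ 1) : |u ⬝ᵥ Δ *ᵥ v| ≤ 2 * δ := by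
  have hmid : ∀ w : ι → ℝ, support w ⊆ support u ∪ support v →
      (∀ j, w j ^ 2 ≤ (u j ^ 2 + v j ^ 2) / 2) → |w ⬝ᵥ Δ *ᵥ w| ≤ δ := by
    intro w hsupp hw
    apply hsparse w
    · rw [Real.sqrt_le_one]
      calc ∑ j, w j ^ 2 ≤ ∑ j, (u j ^ 2 + v j ^ 2) / 2 := sum_le_sum fun j _ => hw j
        _ ≤ 1 := by rw [← sum_div, sum_add_distrib]; linarith
    · calc (support w).ncard ≤ (support u ∪ support v).ncard :=
            Set.ncard_le_ncard hsupp (Set.toFinite _)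
        _ ≤ (support u).ncard + (support v).ncard := Set.ncard_union_le _ _
        _ ≤ 2 * s := by omega
  rw [dotProduct_mulVec_eq_polarization hΔ, two_mul]
  refine (abs_sub _ _).trans (add_le_add (hmid _ ?_ fun j => ?_) (hmid _ ?_ fun j => ?_))
  · exact (support_smul_subset_right _ _).trans (support_add _ _)
  · simp only [Pi.smul_apply, Pi.add_apply, smul_eq_mul]
    nlinarith [sq_nonneg (u j - v j)]
  · exact (support_smul_subset_right _ _).trans (support_sub _ _)
  · simp only [Pi.smul_apply, Pi.sub_apply, smul_eq_mul]
    nlinarith [sq_nonneg (u j + v j)]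

lemma sum_sq_inv_sqrt_smul_le (w : ι → ℝ) : ∑ j, ((√(∑ i, w i ^ 2))⁻¹ • w) j ^ 2 ≤ 1 := by
  simp only [Pi.smul_apply, smul_eq_mul, mul_pow, ← mul_sum, inv_pow,
    Real.sq_sqrt (sum_nonneg fun i _ => sq_nonneg (w i))]
  exact inv_mul_le_one

lemma sqrt_sum_sq_smul_inv_smul (w : ι → ℝ) :
    √(∑ i, w i ^ 2) • (√(∑ i, w i ^ 2))⁻¹ • w = w := by
  by_cases h : √(∑ i, w i ^ 2) = 0
  · have hw : w = 0 := by
      rw [Real.sqrt_eq_zero (sum_nonneg fun i _ => sq_nonneg (w i)),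
        sum_eq_zero_iff_of_nonneg fun i _ => sq_nonneg (w i)] at h
      exact funext fun i => pow_eq_zero_iff two_ne_zero |>.mp (h i (mem_univ i))
    simp [hw]
  · exact smul_inv_smul₀ h w

lemma abs_dotProduct_mulVec_le_mul_of_unit {Δ : Matrix ι ι ℝ} {s : ℕ} {C : ℝ}
    (hunit : ∀ u v : ι → ℝ, (support u).ncard ≤ s → (support v).ncard ≤ s →
      ∑ j, u j ^ 2 ≤ 1 → ∑ j, v j ^ 2 ≤ 1 → |u ⬝ᵥ Δ *ᵥ v| ≤ C)
    {u v : ι → ℝ} (hu : (support u).ncard ≤ s) (hv : (support v).ncard ≤ s) :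
    |u ⬝ᵥ Δ *ᵥ v| ≤ C * (√(∑ j, u j ^ 2) * √(∑ j, v j ^ 2)) := by
  set a := √(∑ j, u j ^ 2)
  set b := √(∑ j, v j ^ 2)
  have hsupp : ∀ (c : ℝ) (w : ι → ℝ), (support (c • w)).ncard ≤ (support w).ncard :=
    fun c w => Set.ncard_le_ncard (support_smul_subset_right _ _) (Set.toFinite _)
  have hC := hunit (a⁻¹ • u) (b⁻¹ • v) ((hsupp _ _).trans hu) ((hsupp _ _).trans hv)
    (sum_sq_inv_sqrt_smul_le u) (sum_sq_inv_sqrt_smul_le v)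
  calc |u ⬝ᵥ Δ *ᵥ v| = |(a • a⁻¹ • u) ⬝ᵥ Δ *ᵥ (b • b⁻¹ • v)| := by
        rw [sqrt_sum_sq_smul_inv_smul, sqrt_sum_sq_smul_inv_smul]
    _ = a * b * |(a⁻¹ • u) ⬝ᵥ Δ *ᵥ (b⁻¹ • v)| := by
        rw [mulVec_smul, smul_dotProduct, dotProduct_smul, smul_eq_mul, smul_eq_mul, abs_mul,
          abs_mul, abs_of_nonneg (Real.sqrt_nonneg _), abs_of_nonneg (Real.sqrt_nonneg _),
          mul_assoc]
    _ ≤ C * (a * b) := by rw [mul_comm C]; gcongr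

lemma abs_sum_dotProduct_mulVec_sum_le {κ : Type*} (K : Finset κ) (Δ : Matrix ι ι ℝ)
    (Y : κ → ι → ℝ) (N : κ → ℝ) (C : ℝ)
    (hY : ∀ k ∈ K, ∀ l ∈ K, |Y k ⬝ᵥ Δ *ᵥ Y l| ≤ C * (N k * N l)) :
    |(∑ k ∈ K, Y k) ⬝ᵥ Δ *ᵥ ∑ l ∈ K, Y l| ≤ C * (∑ k ∈ K, N k) ^ 2 := by
  rw [mulVec_sum, sum_dotProduct]
  simp_rw [dotProduct_sum]
  calc |∑ k ∈ K, ∑ l ∈ K, Y k ⬝ᵥ Δ *ᵥ Y l| ≤ ∑ k ∈ K, ∑ l ∈ K, |Y k ⬝ᵥ Δ *ᵥ Y l| :=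
        (abs_sum_le_sum_abs _ _).trans (sum_le_sum fun k _ => abs_sum_le_sum_abs _ _)
    _ ≤ ∑ k ∈ K, ∑ l ∈ K, C * (N k * N l) :=
        sum_le_sum fun k hk => sum_le_sum fun l hl => hY k hk l hl
    _ = C * (∑ k ∈ K, N k) ^ 2 := by simp_rw [sq, sum_mul_sum, mul_sum]

end SparseBilinear

lemma exists_equiv_fin_antitone {ι α : Type*} [Fintype ι] [LinearOrder α] (f : ι → α) :
    ∃ ρ : ι ≃ Fin (Fintype.card ι), ∀ i j, ρ i ≤ ρ j → f j ≤ f i := by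
  let e := Fintype.equivFin ι
  let g : Fin (Fintype.card ι) → αᵒᵈ := fun r => OrderDual.toDual (f (e.symm r))
  refine ⟨e.trans (Tuple.sort g).symm, fun i j hij => ?_⟩
  simpa [g] using Tuple.monotone_sort g hij

lemma sum_sq_le_sq_sum_abs_div {ι : Type*} {P Q : Finset ι} {x : ι → ℝ} {s : ℕ} (hs : 0 < s)
    (hP : #P ≤ s) (hQ : s ≤ #Q) (hdom : ∀ i ∈ P, ∀ j ∈ Q, |x i| ≤ |x j|) :
    ∑ i ∈ P, x i ^ 2 ≤ (∑ j ∈ Q, |x j|) ^ 2 / s := by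
  set L := ∑ j ∈ Q, |x j|
  have hs' : (0 : ℝ) < s := by exact_mod_cast hs
  have hmax : ∀ i ∈ P, |x i| ≤ L / s := by
    intro i hi
    rw [le_div_iff₀ hs']
    calc |x i| * s ≤ |x i| * #Q := by gcongr
      _ = ∑ _j ∈ Q, |x i| := by rw [sum_const, nsmul_eq_mul, mul_comm]
      _ ≤ L := sum_le_sum (hdom i hi)
  calc ∑ i ∈ P, x i ^ 2 ≤ ∑ _i ∈ P, (L / s) ^ 2 :=
        sum_le_sum fun i hi => sq_abs (x i) ▸ pow_le_pow_left₀ (abs_nonneg _) (hmax i hi) 2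
    _ = #P * (L / s) ^ 2 := by rw [sum_const, nsmul_eq_mul]
    _ ≤ s * (L / s) ^ 2 := by gcongr
    _ = L ^ 2 / s := by field_simp

lemma sum_sq_indicator {ι : Type*} [Fintype ι] (B : Finset ι) (x : ι → ℝ) :
    ∑ j, (B : Set ι).indicator x j ^ 2 = ∑ j ∈ B, x j ^ 2 := by
  classical
  simp [Set.indicator_apply, apply_ite (· ^ 2), sum_ite_mem]

lemma rank_div_lt {ι : Type*} {n : ℕ} (ρ : ι ≃ Fin n) (s : ℕ) (i : ι) : (ρ i : ℕ) / s < n :=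
  (Nat.div_le_self _ _).trans_lt (ρ i).isLt

section RankBlocks

variable {ι : Type*} [Fintype ι] {n : ℕ} (ρ : ι ≃ Fin n) (s : ℕ)

def rankBlock (k : ℕ) : Finset ι := {i | (ρ i : ℕ) / s = k}

variable {ρ s}

lemma mem_rankBlock {i : ι} {k : ℕ} : i ∈ rankBlock ρ s k ↔ (ρ i : ℕ) / s = k := by
  simp [rankBlock]

lemma card_rankBlock_le (hs : 0 < s) (k : ℕ) : #(rankBlock ρ s k) ≤ s := by
  have hmaps : ∀ i ∈ rankBlock ρ s k, (ρ i : ℕ) ∈ Ico (k * s) (k * s + s) := by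
    intro i hi
    have := (Nat.div_eq_iff hs).mp (mem_rankBlock.mp hi)
    rw [mem_Ico]; omega
  simpa using card_le_card_of_injOn _ hmaps fun i _ j _ h => ρ.injective (Fin.ext h)

lemma le_card_rankBlock (hs : 0 < s) {i : ι} {k : ℕ} (hi : i ∈ rankBlock ρ s (k + 1)) :
    s ≤ #(rankBlock ρ s k) := by
  have hi' := (Nat.div_eq_iff hs).mp (mem_rankBlock.mp hi)
  have hsub : Ico (k * s) (k * s + s) ⊆ (rankBlock ρ s k).image fun j => (ρ j : ℕ) := by
    intro r hr
    rw [mem_Ico] at hr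
    have hrn : r < n := by have := (ρ i).isLt; rw [add_mul] at hi'; omega
    refine mem_image.mpr ⟨ρ.symm ⟨r, hrn⟩, mem_rankBlock.mpr ?_, by simp⟩
    rw [Equiv.apply_symm_apply, Nat.div_eq_iff hs]
    dsimp only
    omega
  simpa using (card_le_card hsub).trans card_image_le

lemma rank_le_of_mem_rankBlock_succ {i j : ι} {k : ℕ} (hi : i ∈ rankBlock ρ s (k + 1))
    (hj : j ∈ rankBlock ρ s k) : ρ j ≤ ρ i := by
  by_contra h
  have := Nat.div_le_div_right (c := s) (Fin.val_le_of_le (not_le.mp h).le)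
  rw [mem_rankBlock.mp hi, mem_rankBlock.mp hj] at this
  omega

lemma sum_sum_rankBlock {M : Type*} [AddCommMonoid M] (f : ι → M) :
    ∑ k ∈ range n, ∑ i ∈ rankBlock ρ s k, f i = ∑ i, f i :=
  sum_fiberwise_of_maps_to (fun i _ => mem_range.mpr (rank_div_lt ρ s i)) f

lemma sum_indicator_rankBlock {M : Type*} [AddCommMonoid M] (x : ι → M) :
    ∑ k ∈ range (n + 1), (rankBlock ρ s k : Set ι).indicator x = x := by
  ext i
  classical
  simp_rw [Finset.sum_apply, Set.indicator_apply, mem_coe, mem_rankBlock]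
  rw [sum_ite_eq, if_pos (mem_range.mpr ((rank_div_lt ρ s i).trans n.lt_succ_self))]

lemma sum_sqrt_sum_sq_rankBlock_le (hs : 0 < s) {x : ι → ℝ}
    (hx : ∀ i j, ρ i ≤ ρ j → |x j| ≤ |x i|) :
    ∑ k ∈ range (n + 1), √(∑ i ∈ rankBlock ρ s k, x i ^ 2) ≤
      √(∑ i, x i ^ 2) + (∑ i, |x i|) / √s := by
  have hfirst : √(∑ i ∈ rankBlock ρ s 0, x i ^ 2) ≤ √(∑ i, x i ^ 2) :=
    Real.sqrt_le_sqrt (sum_le_sum_of_subset_of_nonneg (subset_univ _) fun i _ _ => sq_nonneg _)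
  have hsucc : ∀ k, √(∑ i ∈ rankBlock ρ s (k + 1), x i ^ 2) ≤
      (∑ i ∈ rankBlock ρ s k, |x i|) / √s := by
    intro k
    obtain hempty | ⟨i, hi⟩ := (rankBlock ρ s (k + 1)).eq_empty_or_nonempty
    · rw [hempty, sum_empty, Real.sqrt_zero]
      positivity
    calc √(∑ i ∈ rankBlock ρ s (k + 1), x i ^ 2)
        ≤ √((∑ i ∈ rankBlock ρ s k, |x i|) ^ 2 / s) :=
          Real.sqrt_le_sqrt <| sum_sq_le_sq_sum_abs_div hs (card_rankBlock_le hs _)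
            (le_card_rankBlock hs hi) fun _ hi' _ hj =>
              hx _ _ (rank_le_of_mem_rankBlock_succ hi' hj)
      _ = (∑ i ∈ rankBlock ρ s k, |x i|) / √s := by
          rw [Real.sqrt_div (sq_nonneg _), Real.sqrt_sq (sum_nonneg fun i _ => abs_nonneg _)]
  calc ∑ k ∈ range (n + 1), √(∑ i ∈ rankBlock ρ s k, x i ^ 2)
      = ∑ k ∈ range n, √(∑ i ∈ rankBlock ρ s (k + 1), x i ^ 2) +
          √(∑ i ∈ rankBlock ρ s 0, x i ^ 2) := sum_range_succ' _ _
    _ ≤ ∑ k ∈ range n, (∑ i ∈ rankBlock ρ s k, |x i|) / √s + √(∑ i, x i ^ 2) :=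
        add_le_add (sum_le_sum fun k _ => hsucc k) hfirst
    _ = √(∑ i, x i ^ 2) + (∑ i, |x i|) / √s := by rw [← sum_div, sum_sum_rankBlock, add_comm]

end RankBlocks

lemma sq_sqrt_add_div_sqrt_le {a t : ℝ} (ha : 0 ≤ a) (ht : 0 ≤ t) (b : ℝ) :
    (√a + b / √t) ^ 2 ≤ 2 * (a + 1 / t * b ^ 2) := by
  refine add_sq_le.trans_eq ?_
  rw [Real.sq_sqrt ha, div_pow, Real.sq_sqrt ht, one_div_mul_eq_div]

/-- Extension lemma (Loh–Wainwright): from a uniform bound on the quadratic form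
over 2s-sparse unit vectors to a bound over all vectors with an ℓ1 correction. -/
theorem stmt16 (d s : ℕ) (hs : 1 ≤ s) (Δ : Matrix (Fin d) (Fin d) ℝ) (hΔ : Δ.IsSymm)
    (δ : ℝ)
    (hsparse : ∀ v : Fin d → ℝ, Real.sqrt (∑ j, v j ^ 2) ≤ 1 →
      {j | v j ≠ 0}.ncard ≤ 2 * s → |v ⬝ᵥ Δ.mulVec v| ≤ δ) :
    ∀ x : Fin d → ℝ, |x ⬝ᵥ Δ.mulVec x| ≤
      27 * δ * ((∑ j, x j ^ 2) + (1 / (s : ℝ)) * (∑ j, |x j|) ^ 2) := by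
  intro x
  obtain ⟨ρ, hρ⟩ := exists_equiv_fin_antitone fun i => |x i|
  have hδ : 0 ≤ δ := by simpa using hsparse 0 (by simp) (by simp)
  set Y := fun k => (rankBlock ρ s k : Set (Fin d)).indicator x
  have hY : ∀ k, (support (Y k)).ncard ≤ s := fun k =>
    (Set.ncard_le_ncard Set.support_indicator_subset (Set.toFinite _)).trans
      ((Set.ncard_coe_finset _).trans_le (card_rankBlock_le hs k))
  set K := range (Fintype.card (Fin d) + 1)
  calc |x ⬝ᵥ Δ *ᵥ x| = |(∑ k ∈ K, Y k) ⬝ᵥ Δ *ᵥ ∑ k ∈ K, Y k| := by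
        rw [sum_indicator_rankBlock]
    _ ≤ 2 * δ * (∑ k ∈ K, √(∑ j, Y k j ^ 2)) ^ 2 :=
        abs_sum_dotProduct_mulVec_sum_le _ _ _ _ _ fun k _ l _ =>
          abs_dotProduct_mulVec_le_mul_of_unit
            (fun _ _ => abs_dotProduct_mulVec_le_of_sparse hΔ hsparse) (hY k) (hY l)
    _ ≤ 2 * δ * (√(∑ j, x j ^ 2) + (∑ j, |x j|) / √s) ^ 2 := by
        simp only [Y, sum_sq_indicator]
        gcongr
        exact sum_sqrt_sum_sq_rankBlock_le hs hρ
    _ ≤ 2 * δ * (2 * ((∑ j, x j ^ 2) + (1 / (s : ℝ)) * (∑ j, |x j|) ^ 2)) := by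
        gcongr
        exact sq_sqrt_add_div_sqrt_le (sum_nonneg fun j _ => sq_nonneg _) s.cast_nonneg _
    _ ≤ 27 * δ * ((∑ j, x j ^ 2) + (1 / (s : ℝ)) * (∑ j, |x j|) ^ 2) := by
        have : 0 ≤ δ * ((∑ j, x j ^ 2) + (1 / (s : ℝ)) * (∑ j, |x j|) ^ 2) :=
          mul_nonneg hδ (by positivity)
        linarith
end
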